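/- arXiv:1101.1527 — 4 statements merged into one kernel-verified Lean document; each statement's English description precedes it below -/
import Mathlib

section
/- Fix μ₀ ≥ 0 and s ∈ ℕ. For μ > μ₀, let X be Poisson distributed with mean μ − μ₀ and Y Poisson distributed with mean μ. Then the total variation-type sum ∑_{t=0}^∞ |P[X = t − s] − P[Y = t]| tends to 0 as μ → ∞ (where P[X = t − s] = 0 for t < s). -/
/-!
Write `p_l` for the Poisson mass function with mean `l` and `Δ_l = ∑ₜ |p_l(t-1) - p_l(t)|` for
the `ℓ¹` cost of shifting it by one. Since `p_l(t-1) = (t/l) p_l(t)`, for `K ~ Pois(l)` we get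
`Δ_l = E|K - l| / l ≤ √(Var K) / l = 1/√l`. By the triangle inequality a shift by `s` costs at
most `s Δ_l`. Moreover `p_{d+l} = ∑ₖ p_d(k) · (p_l shifted by k)` is a mixture of shifts of `p_l`
with average shift `d`, so replacing `p_l` by `p_{d+l}` costs at most `d Δ_l`. With `l = μ - μ₀`
and `d = μ₀` the distance is at most `(s + μ₀)/√(μ - μ₀)`.
-/

open Filter

/-- The Poisson probability mass function with mean `l`. -/
noncomputable def poisP (l : ℝ) (k : ℕ) : ℝ := Real.exp (-l) * l ^ k / (Nat.factorial k)

section Shift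

variable {M : Type*}

def shift [Zero M] (s : ℕ) (f : ℕ → M) (t : ℕ) : M := if s ≤ t then f (t - s) else 0

@[simp]
lemma shift_zero [Zero M] (f : ℕ → M) : shift 0 f = f := by
  funext t; simp [shift]

@[simp]
lemma shift_apply_add [Zero M] (s : ℕ) (f : ℕ → M) (t : ℕ) : shift s f (t + s) = f t := by
  simp [shift]

lemma shift_shift [Zero M] (a b : ℕ) (f : ℕ → M) : shift a (shift b f) = shift (a + b) f := by
  funext t
  unfold shift
  by_cases hab : a + b ≤ t
  · rw [if_pos (by omega), if_pos (by omega), if_pos hab, Nat.sub_sub]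
  · by_cases ha : a ≤ t
    · rw [if_pos ha, if_neg (by omega), if_neg hab]
    · rw [if_neg ha, if_neg hab]

lemma shift_eq_zero_of_notMem_range [Zero M] (s : ℕ) (f : ℕ → M) {t : ℕ}
    (ht : t ∉ Set.range (· + s)) : shift s f t = 0 :=
  if_neg fun hst => ht ⟨t - s, Nat.sub_add_cancel hst⟩

variable [AddCommMonoid M] [TopologicalSpace M]

lemma summable_shift_iff {s : ℕ} {f : ℕ → M} : Summable (shift s f) ↔ Summable f := by
  rw [← (add_left_injective s).summable_iff fun t => shift_eq_zero_of_notMem_range s f]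
  simp [Function.comp_def]

lemma tsum_shift (s : ℕ) (f : ℕ → M) : ∑' t, shift s f t = ∑' t, f t := by
  rw [← (add_left_injective s).tsum_eq fun t ht => by_contra fun h =>
    ht (shift_eq_zero_of_notMem_range s f h)]
  simp

end Shift

lemma abs_shift_sub_shift (s : ℕ) (f g : ℕ → ℝ) (t : ℕ) :
    |shift s f t - shift s g t| = shift s (fun u => |f u - g u|) t := by
  unfold shift
  split_ifs <;> simp

lemma tsum_abs_sub_le_add {α : Type*} {f g h : α → ℝ} (hf : Summable f) (hg : Summable g)
    (hh : Summable h) :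
    ∑' t, |f t - h t| ≤ ∑' t, |f t - g t| + ∑' t, |g t - h t| := by
  rw [← ((hf.sub hg).abs).tsum_add ((hg.sub hh).abs)]
  exact ((hf.sub hh).abs).tsum_le_tsum (fun t => abs_sub_le _ _ _)
    (((hf.sub hg).abs).add (hg.sub hh).abs)

lemma tsum_abs_shift_sub_le {f : ℕ → ℝ} (hf : Summable f) (k : ℕ) :
    ∑' t, |shift k f t - f t| ≤ k * ∑' t, |shift 1 f t - f t| := by
  induction k with
  | zero => simp
  | succ k ih =>
    have hshift : ∀ j, Summable (shift j f) := fun j => summable_shift_iff.mpr hf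
    calc ∑' t, |shift (k + 1) f t - f t|
        ≤ ∑' t, |shift 1 (shift k f) t - shift 1 f t| + ∑' t, |shift 1 f t - f t| := by
          rw [shift_shift, add_comm 1]
          exact tsum_abs_sub_le_add (hshift _) (hshift _) hf
      _ = ∑' t, |shift k f t - f t| + ∑' t, |shift 1 f t - f t| := by
          simp_rw [abs_shift_sub_shift, tsum_shift]
      _ ≤ (k + 1 : ℕ) * ∑' t, |shift 1 f t - f t| := by
          push_cast; linarith

lemma abs_tsum_mul_sub_le {β : Type*} {q : β → ℝ} (hq : HasSum q 1) (hq0 : ∀ k, 0 ≤ q k)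
    {x : β → ℝ} {y : ℝ} (hxy : Summable fun k => q k * |x k - y|) :
    |∑' k, q k * x k - y| ≤ ∑' k, q k * |x k - y| := by
  have habs : ∀ k, |q k * (x k - y)| = q k * |x k - y| := fun k => by
    rw [abs_mul, abs_of_nonneg (hq0 k)]
  have hnorm : Summable fun k => ‖q k * (x k - y)‖ := by
    simpa only [Real.norm_eq_abs, habs] using hxy
  have hmix : HasSum (fun k => q k * x k) (∑' k, q k * (x k - y) + y) := by
    simpa only [← mul_add, sub_add_cancel, one_mul] using hnorm.of_norm.hasSum.add (hq.mul_right y)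
  rw [hmix.tsum_eq, add_sub_cancel_right, ← tsum_congr habs]
  exact norm_tsum_le_tsum_norm hnorm

lemma tsum_abs_tsum_mul_sub_le {α β : Type*} {q : β → ℝ} (hq : HasSum q 1) (hq0 : ∀ k, 0 ≤ q k)
    {f : α → ℝ} {F : β → α → ℝ} (hF : ∀ k, Summable fun t => |F k t - f t|)
    (hsum : Summable fun k => q k * ∑' t, |F k t - f t|) :
    ∑' t, |∑' k, q k * F k t - f t| ≤ ∑' k, q k * ∑' t, |F k t - f t| := by
  have hG : Summable fun x : β × α => q x.1 * |F x.1 x.2 - f x.2| :=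
    (summable_prod_of_nonneg fun x => mul_nonneg (hq0 x.1) (abs_nonneg _)).mpr
      ⟨fun k => (hF k).mul_left (q k), by simpa only [tsum_mul_left] using hsum⟩
  have hpoint (t : α) : |∑' k, q k * F k t - f t| ≤ ∑' k, q k * |F k t - f t| :=
    abs_tsum_mul_sub_le hq hq0 (hG.prod_symm.prod_factor t)
  have hmixture : Summable fun t => ∑' k, q k * |F k t - f t| := hG.prod_symm.prod
  calc ∑' t, |∑' k, q k * F k t - f t|
      ≤ ∑' t, ∑' k, q k * |F k t - f t| :=
        Summable.tsum_le_tsum hpoint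
          (.of_nonneg_of_le (fun _ => abs_nonneg _) hpoint hmixture) hmixture
    _ = ∑' k, q k * ∑' t, |F k t - f t| := by
        simp_rw [← tsum_mul_left]
        exact hG.tsum_comm

section Poisson

variable {l : ℝ}

lemma poisP_nonneg (hl : 0 ≤ l) (k : ℕ) : 0 ≤ poisP l k := by
  unfold poisP; positivity

lemma hasSum_poisP (hl : 0 ≤ l) : HasSum (poisP l) 1 :=
  ProbabilityTheory.hasSum_one_poissonMeasure ⟨l, hl⟩

lemma succ_mul_poisP_succ (n : ℕ) : (n + 1 : ℝ) * poisP l (n + 1) = l * poisP l n := by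
  unfold poisP
  rw [Nat.factorial_succ]
  push_cast
  field_simp
  ring

lemma HasSum.mul_poisP_pred {g : ℕ → ℝ} {a : ℝ} (h : HasSum (fun n => g n * poisP l n) a) :
    HasSum (fun k : ℕ => k * g (k - 1) * poisP l k) (l * a) := by
  have hshift : HasSum (fun n : ℕ => ((n + 1 : ℕ) : ℝ) * g (n + 1 - 1) * poisP l (n + 1))
      (l * a) := by
    have hterm (n : ℕ) : ((n + 1 : ℕ) : ℝ) * g (n + 1 - 1) * poisP l (n + 1)
        = l * (g n * poisP l n) := by
      push_cast
      rw [mul_right_comm, succ_mul_poisP_succ]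
      ring
    simpa only [hterm] using h.mul_left l
  exact (hasSum_nat_add_iff' 1).mp (by simpa using hshift)

lemma hasSum_mul_poisP (hl : 0 ≤ l) : HasSum (fun k : ℕ => k * poisP l k) l := by
  have h := HasSum.mul_poisP_pred (g := fun _ => 1) (by simpa using hasSum_poisP hl)
  rw [mul_one] at h
  simpa using h

lemma hasSum_sq_sub_mul_poisP (hl : 0 ≤ l) : HasSum (fun k : ℕ => (k - l) ^ 2 * poisP l k) l := by
  have h2 : HasSum (fun k : ℕ => k * ((k - 1 : ℕ) : ℝ) * poisP l k) (l * l) :=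
    (hasSum_mul_poisP hl).mul_poisP_pred
  convert (h2.add ((hasSum_mul_poisP hl).mul_left (1 - 2 * l))).add
    ((hasSum_poisP hl).mul_left (l ^ 2)) using 1
  · funext k
    rcases k with _ | k
    · simp
    · push_cast; ring
  · ring

lemma tsum_abs_sub_mul_poisP_le (hl : 0 < l) : ∑' k : ℕ, |(k : ℝ) - l| * poisP l k ≤ √l := by
  have hsqrt : 0 < √l := Real.sqrt_pos.mpr hl
  -- `2 √l |x| ≤ l + x²`, then take expectations using `E (K - l)² = l`
  have hpoint (k : ℕ) : |(k : ℝ) - l| * poisP l k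
      ≤ (√l * poisP l k + (k - l) ^ 2 * poisP l k / √l) / 2 := by
    have hamgm : |(k : ℝ) - l| ≤ (√l + (k - l) ^ 2 / √l) / 2 := by
      rw [le_div_iff₀ two_pos, ← sq_abs, add_div' _ _ _ hsqrt.ne', le_div_iff₀ hsqrt]
      nlinarith [sq_nonneg (|(k : ℝ) - l| - √l), Real.sq_sqrt hl.le]
    calc |(k : ℝ) - l| * poisP l k ≤ (√l + (k - l) ^ 2 / √l) / 2 * poisP l k :=
          mul_le_mul_of_nonneg_right hamgm (poisP_nonneg hl.le k)
      _ = _ := by ring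
  have hbound : HasSum (fun k : ℕ => (√l * poisP l k + (k - l) ^ 2 * poisP l k / √l) / 2)
      ((√l * 1 + l / √l) / 2) :=
    (((hasSum_poisP hl.le).mul_left √l).add
      ((hasSum_sq_sub_mul_poisP hl.le).div_const √l)).div_const 2
  have hsummable : Summable fun k : ℕ => |(k : ℝ) - l| * poisP l k :=
    .of_nonneg_of_le (fun k => mul_nonneg (abs_nonneg _) (poisP_nonneg hl.le k)) hpoint
      hbound.summable
  calc ∑' k : ℕ, |(k : ℝ) - l| * poisP l k
      ≤ ∑' k : ℕ, (√l * poisP l k + (k - l) ^ 2 * poisP l k / √l) / 2 :=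
        hsummable.tsum_le_tsum hpoint hbound.summable
    _ = (√l * 1 + l / √l) / 2 := hbound.tsum_eq
    _ = √l := by rw [Real.div_sqrt]; ring

lemma shift_one_poisP (hl : l ≠ 0) (t : ℕ) : shift 1 (poisP l) t = t / l * poisP l t := by
  rcases t with _ | n
  · simp [shift]
  · rw [shift_apply_add, Nat.cast_succ, div_mul_eq_mul_div, succ_mul_poisP_succ,
      mul_div_cancel_left₀ _ hl]

lemma tsum_abs_shift_one_poisP_sub_le (hl : 0 < l) :
    ∑' t, |shift 1 (poisP l) t - poisP l t| ≤ (√l)⁻¹ := by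
  have hterm (t : ℕ) : |shift 1 (poisP l) t - poisP l t| = |(t : ℝ) - l| * poisP l t / l := by
    rw [shift_one_poisP hl.ne', ← sub_one_mul, abs_mul, abs_of_nonneg (poisP_nonneg hl.le t),
      div_sub_one hl.ne', abs_div, abs_of_pos hl]
    ring
  rw [tsum_congr hterm, tsum_div_const, ← Real.sqrt_div_self]
  gcongr
  exact tsum_abs_sub_mul_poisP_le hl

lemma poisP_add (a b : ℝ) (t : ℕ) :
    poisP (a + b) t = ∑ k ∈ Finset.range (t + 1), poisP a k * poisP b (t - k) := by
  unfold poisP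
  rw [neg_add, Real.exp_add, add_pow, Finset.mul_sum, Finset.sum_div]
  refine Finset.sum_congr rfl fun k hk => ?_
  have hkt : k ≤ t := Nat.lt_succ_iff.mp (Finset.mem_range.mp hk)
  rw [Nat.cast_choose ℝ hkt]
  field_simp

lemma poisP_add_eq_tsum_mul_shift (a b : ℝ) (t : ℕ) :
    poisP (a + b) t = ∑' k, poisP a k * shift k (poisP b) t := by
  rw [tsum_eq_sum (s := Finset.range (t + 1)), poisP_add]
  · refine Finset.sum_congr rfl fun k hk => ?_
    rw [shift, if_pos (Nat.lt_succ_iff.mp (Finset.mem_range.mp hk))]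
  · intro k hk
    rw [shift, if_neg fun hkt => hk (Finset.mem_range.mpr (Nat.lt_succ_of_le hkt)), mul_zero]

lemma tsum_abs_poisP_add_sub_le {d : ℝ} (hd : 0 ≤ d) (hl : 0 ≤ l) :
    ∑' t, |poisP (d + l) t - poisP l t| ≤ d * ∑' t, |shift 1 (poisP l) t - poisP l t| := by
  set Δ := ∑' t, |shift 1 (poisP l) t - poisP l t|
  have hp := (hasSum_poisP hl).summable
  have hcost (k : ℕ) :
      poisP d k * ∑' t, |shift k (poisP l) t - poisP l t| ≤ poisP d k * k * Δ := by
    rw [mul_assoc]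
    exact mul_le_mul_of_nonneg_left (tsum_abs_shift_sub_le hp k) (poisP_nonneg hd k)
  have hmean : HasSum (fun k : ℕ => poisP d k * k * Δ) (d * Δ) := by
    simpa only [mul_comm (poisP d _)] using (hasSum_mul_poisP hd).mul_right Δ
  have hsum : Summable fun k => poisP d k * ∑' t, |shift k (poisP l) t - poisP l t| :=
    .of_nonneg_of_le (fun k => mul_nonneg (poisP_nonneg hd k) (tsum_nonneg fun _ => abs_nonneg _))
      hcost hmean.summable
  simp_rw [poisP_add_eq_tsum_mul_shift d l]
  calc ∑' t, |∑' k, poisP d k * shift k (poisP l) t - poisP l t|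
      ≤ ∑' k, poisP d k * ∑' t, |shift k (poisP l) t - poisP l t| :=
        tsum_abs_tsum_mul_sub_le (hasSum_poisP hd) (poisP_nonneg hd)
          (fun k => ((summable_shift_iff.mpr hp).sub hp).abs) hsum
    _ ≤ d * Δ := (Summable.tsum_le_tsum hcost hsum hmean.summable).trans_eq hmean.tsum_eq

lemma tsum_abs_shift_poisP_sub_poisP_add_le {d : ℝ} (hd : 0 ≤ d) (hl : 0 < l) (s : ℕ) :
    ∑' t, |shift s (poisP l) t - poisP (d + l) t| ≤ (s + d) / √l := by
  have hp := (hasSum_poisP hl.le).summable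
  have hΔ := tsum_abs_shift_one_poisP_sub_le hl
  have hΔ0 : 0 ≤ ∑' t, |shift 1 (poisP l) t - poisP l t| := tsum_nonneg fun _ => abs_nonneg _
  calc ∑' t, |shift s (poisP l) t - poisP (d + l) t|
      ≤ ∑' t, |shift s (poisP l) t - poisP l t| + ∑' t, |poisP (d + l) t - poisP l t| := by
        simp_rw [abs_sub_comm (poisP (d + l) _)]
        exact tsum_abs_sub_le_add (summable_shift_iff.mpr hp) hp
          (hasSum_poisP (by positivity)).summable
    _ ≤ s * ∑' t, |shift 1 (poisP l) t - poisP l t|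
          + d * ∑' t, |shift 1 (poisP l) t - poisP l t| :=
        add_le_add (tsum_abs_shift_sub_le hp s) (tsum_abs_poisP_add_sub_le hd hl.le)
    _ ≤ (s + d) / √l := by
        rw [← add_mul, div_eq_mul_inv]
        gcongr

end Poisson

/-- Shifting a Poisson distribution by a fixed integer `s` and decreasing its mean by a fixed
amount `μ₀` becomes negligible in total variation as the mean `μ → ∞`. -/
theorem stmt0 (μ₀ : ℝ) (hμ₀ : 0 ≤ μ₀) (s : ℕ) :
    Tendsto (fun μ : ℝ =>
        ∑' t : ℕ, |(if s ≤ t then poisP (μ - μ₀) (t - s) else 0) - poisP μ t|)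
      atTop (nhds 0) := by
  have hbound : Tendsto (fun μ : ℝ => (s + μ₀) / √(μ - μ₀)) atTop (nhds 0) :=
    tendsto_const_nhds.div_atTop
      (Real.tendsto_sqrt_atTop.comp (tendsto_atTop_add_const_right atTop (-μ₀) tendsto_id))
  refine tendsto_of_tendsto_of_tendsto_of_le_of_le' tendsto_const_nhds hbound
    (.of_forall fun μ => tsum_nonneg fun t => abs_nonneg _) ?_
  filter_upwards [eventually_gt_atTop μ₀] with μ hμ
  have hdist := tsum_abs_shift_poisP_sub_poisP_add_le hμ₀ (sub_pos.mpr hμ) s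
  rwa [add_sub_cancel] at hdist
end

section
/- Let A, B be events with P[B] > 0, let N be a random variable taking values in ℕ, and suppose P[A | B, N = n] = P[A | N = n] whenever P[B ∩ {N = n}] > 0. Then |P[A | B] − P[A]| ≤ ∑_{n=0}^∞ |P[N = n | B] − P[N = n]|. -/
/-!
Split every probability along the fibres `{N = n}`. With `qₙ = P[A | N = n] ∈ [0, 1]`, conditional
independence gives `P[A ∩ B ∩ {N = n}] = qₙ P[B ∩ {N = n}]` and `P[A ∩ {N = n}] = qₙ P[N = n]`, so
the `n`-th term of `P[A | B] - P[A]` is `qₙ` times the `n`-th term of the total variation sum.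
-/

open MeasureTheory

section Partition

variable {Ω α : Type*} [MeasurableSpace Ω] [MeasurableSpace α] [Countable α]
  [MeasurableSingletonClass α] (μ : Measure Ω) {N : Ω → α}

theorem tsum_measure_inter_preimage_singleton (hN : Measurable N) (S : Set Ω) :
    ∑' a, μ (S ∩ N ⁻¹' {a}) = μ S := by
  have hfib : ∀ a, MeasurableSet (N ⁻¹' {a}) := fun a => hN (measurableSet_singleton a)
  calc ∑' a, μ (S ∩ N ⁻¹' {a}) = ∑' a, μ.restrict S (N ⁻¹' {a}) := by
        simp only [Measure.restrict_apply (hfib _), Set.inter_comm]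
    _ = μ.restrict S (⋃ a, N ⁻¹' {a}) := (measure_iUnion (pairwise_disjoint_fiber N) hfib).symm
    _ = μ S := by
        rw [← Set.preimage_iUnion, Set.iUnion_of_singleton, Set.preimage_univ,
          Measure.restrict_apply_univ]

theorem hasSum_measureReal_inter_preimage_singleton [IsFiniteMeasure μ] (hN : Measurable N)
    (S : Set Ω) : HasSum (fun a => μ.real (S ∩ N ⁻¹' {a})) (μ.real S) := by
  have hsum := tsum_measure_inter_preimage_singleton μ hN S
  have h := ENNReal.hasSum_toReal (hsum ▸ measure_ne_top μ S)
  rwa [← ENNReal.tsum_toReal_eq fun _ => measure_ne_top _ _, hsum] at h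

end Partition

theorem abs_div_sub_le_of_eq_mul {x a c p q b : ℝ} (hx : x = q * c) (ha : a = q * p)
    (hq₀ : 0 ≤ q) (hq₁ : q ≤ 1) : |x / b - a| ≤ |c / b - p| :=
  calc |x / b - a| = q * |c / b - p| := by
        rw [hx, ha, mul_div_assoc, ← mul_sub, abs_mul, abs_of_nonneg hq₀]
    _ ≤ |c / b - p| := mul_le_of_le_one_left (abs_nonneg _) hq₁

theorem abs_measureReal_inter_div_sub_le {Ω : Type*} [MeasurableSpace Ω] (μ : Measure Ω)
    [IsFiniteMeasure μ] {A B E : Set Ω}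
    (h : μ (B ∩ E) ≠ 0 →
      μ.real (A ∩ (B ∩ E)) / μ.real (B ∩ E) = μ.real (A ∩ E) / μ.real E) (b : ℝ) :
    |μ.real (A ∩ (B ∩ E)) / b - μ.real (A ∩ E)| ≤ |μ.real (B ∩ E) / b - μ.real E| := by
  have hAE : μ.real (A ∩ E) ≤ μ.real E := measureReal_mono Set.inter_subset_right
  refine abs_div_sub_le_of_eq_mul (q := μ.real (A ∩ E) / μ.real E) ?_ ?_ (by positivity)
    (div_le_one_of_le₀ hAE measureReal_nonneg)
  · by_cases hBE : μ (B ∩ E) = 0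
    · simp [measureReal_def, hBE, measure_mono_null Set.inter_subset_right hBE]
    · rw [← h hBE, div_mul_cancel₀]
      exact (measureReal_ne_zero_iff).mpr hBE
  · by_cases hE : μ.real E = 0
    · have : μ.real (A ∩ E) = 0 := le_antisymm (hE ▸ hAE) measureReal_nonneg
      simp [hE, this]
    · exact (div_mul_cancel₀ _ hE).symm

theorem stmt4_general {Ω : Type*} [MeasurableSpace Ω] (P : Measure Ω) [IsProbabilityMeasure P]
    (A B : Set Ω) (N : Ω → ℕ) (hNm : Measurable N)
    (h : ∀ n : ℕ, P (B ∩ {ω | N ω = n}) ≠ 0 →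
      (P (A ∩ (B ∩ {ω | N ω = n}))).toReal / (P (B ∩ {ω | N ω = n})).toReal
        = (P (A ∩ {ω | N ω = n})).toReal / (P {ω | N ω = n}).toReal) :
    |(P (A ∩ B)).toReal / (P B).toReal - (P A).toReal|
      ≤ ∑' n : ℕ,
          |(P ({ω | N ω = n} ∩ B)).toReal / (P B).toReal - (P {ω | N ω = n}).toReal| := by
  have hfiber : ∀ n, {ω | N ω = n} = N ⁻¹' {n} := fun _ => rfl
  have hcomm : ∀ n, N ⁻¹' {n} ∩ B = B ∩ N ⁻¹' {n} := fun _ => Set.inter_comm _ _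
  simp only [hfiber, hcomm, ← measureReal_def] at h ⊢
  have hsplit : HasSum (fun n => P.real (A ∩ (B ∩ N ⁻¹' {n})) / P.real B - P.real (A ∩ N ⁻¹' {n}))
      (P.real (A ∩ B) / P.real B - P.real A) := by
    simpa only [Set.inter_assoc] using
      ((hasSum_measureReal_inter_preimage_singleton P hNm (A ∩ B)).div_const _).sub
        (hasSum_measureReal_inter_preimage_singleton P hNm A)
  have hlaw : Summable fun n => P.real (B ∩ N ⁻¹' {n}) / P.real B - P.real (N ⁻¹' {n}) := by
    simpa using (((hasSum_measureReal_inter_preimage_singleton P hNm B).div_const _).sub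
      (hasSum_measureReal_inter_preimage_singleton P hNm Set.univ)).summable
  exact hsplit.norm_le_of_bounded (summable_abs_iff.2 hlaw).hasSum
    fun n => abs_measureReal_inter_div_sub_le P (h n) _

/-- If `A` and `B` are conditionally independent given the value of `N`, then the distance between
`P[A | B]` and `P[A]` is bounded by the total variation distance between the conditional and
unconditional laws of `N`. All conditional probabilities are elementary ratios. -/
theorem stmt4 {Ω : Type*} [MeasurableSpace Ω] (P : Measure Ω) [IsProbabilityMeasure P]
    (A B : Set Ω) (hAm : MeasurableSet A) (hBm : MeasurableSet B)
    (N : Ω → ℕ) (hNm : Measurable N) (hB : P B ≠ 0)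
    (h : ∀ n : ℕ, P (B ∩ {ω | N ω = n}) ≠ 0 →
      (P (A ∩ (B ∩ {ω | N ω = n}))).toReal / (P (B ∩ {ω | N ω = n})).toReal
        = (P (A ∩ {ω | N ω = n})).toReal / (P {ω | N ω = n}).toReal) :
    |(P (A ∩ B)).toReal / (P B).toReal - (P A).toReal|
      ≤ ∑' n : ℕ,
          |(P ({ω | N ω = n} ∩ B)).toReal / (P B).toReal - (P {ω | N ω = n}).toReal| :=
  stmt4_general P A B N hNm h
end

section
/- Let N be a nonnegative-integer-valued random variable, B an event with P[B] > 0, and C, D ∈ ℕ thresholds such that P[N ≥ D] < εP[B]/4 and, for some auxiliary variable η with P[η ≥ C] < εP[B]/4. Suppose ∑_{n=0}^∞ |P[N = n | η = m] − P[N = n]| < ε/(4C) for every m < C, and that P[N = n | B, η = m] = P[N = n | η = m] for all n, m. Then ∑_{n=0}^∞ |P[N = n | B] − P[N = n]| ≤ 3ε/4. -/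
/-!
Split `B` according to the value of `η`. On `B ∩ {η = m}` with `m < C`, conditional independence
gives `P[N = n, B, η = m] = P[B, η = m] · P[N = n | η = m]`, so these pieces contribute at most
`P[B] · ε / 4` to `∑ₙ |P[N = n, B] - P[B] P[N = n]|`. The remaining piece `B ∩ {η ≥ C}` contributes
at most `2 P[B ∩ {η ≥ C}] < P[B] · ε / 2`. Dividing by `P[B]` gives `3ε/4`.
-/

open MeasureTheory Finset

section FiberDecomposition

variable {Ω : Type*} [MeasurableSpace Ω] {μ : Measure Ω} [IsFiniteMeasure μ] {f : Ω → ℕ}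

-- `X` need not be measurable: the fibers of `f` are measurable for `μ.restrict X`.
theorem hasSum_measureReal_fiber_inter (hf : Measurable f) (X : Set Ω) :
    HasSum (fun m => μ.real ({ω | f ω = m} ∩ X)) (μ.real X) := by
  have hfib : ∀ m, MeasurableSet {ω | f ω = m} := fun m => hf (measurableSet_singleton m)
  have h := measure_iUnion (μ := μ.restrict X) (f := fun m => {ω | f ω = m})
    (fun i j hij => Set.disjoint_left.2 fun ω hi hj => hij (hi.symm.trans hj)) hfib
  have hU : (⋃ m, {ω | f ω = m}) = Set.univ := Set.iUnion_eq_univ_iff.2 fun ω => ⟨f ω, rfl⟩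
  rw [hU, Measure.restrict_apply_univ] at h
  simp only [Measure.restrict_apply (hfib _)] at h
  have hfin : ∑' m, μ ({ω | f ω = m} ∩ X) ≠ ⊤ := h ▸ measure_ne_top μ X
  simpa only [measureReal_def, h, ENNReal.tsum_toReal_eq (ENNReal.ne_top_of_tsum_ne_top hfin)]
    using ENNReal.hasSum_toReal hfin

theorem measureReal_eq_sum_fiber_inter_add (hf : Measurable f) (X : Set Ω) (C : ℕ) :
    μ.real X = ∑ m ∈ range C, μ.real ({ω | f ω = m} ∩ X) + μ.real ({ω | C ≤ f ω} ∩ X) := by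
  have hfib : ∀ m, MeasurableSet {ω | f ω = m} := fun m => hf (measurableSet_singleton m)
  have htail : MeasurableSet {ω | C ≤ f ω} := hf measurableSet_Ici
  have hhead : (⋃ m ∈ range C, {ω | f ω = m}) = {ω | C ≤ f ω}ᶜ := by
    ext ω; simp
  have hsum := measureReal_biUnion_finset (μ := μ.restrict X) (s := range C)
    (f := fun m => {ω | f ω = m})
    (fun i _ j _ hij => Set.disjoint_left.2 fun ω hi hj => hij (hi.symm.trans hj))
    (fun m _ => hfib m)
  have hsplit := measureReal_add_measureReal_compl (μ := μ.restrict X) htail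
  rw [← hhead, hsum, measureReal_restrict_apply_univ, measureReal_restrict_apply htail] at hsplit
  simp only [measureReal_restrict_apply (hfib _)] at hsplit
  linarith

end FiberDecomposition

section ConditionalLaw

variable {Ω : Type*} [MeasurableSpace Ω] {μ : Measure Ω} [IsFiniteMeasure μ] {N η : Ω → ℕ}

theorem abs_measureReal_inter_sub_mul_le (hη : Measurable η) (X B : Set Ω) (C : ℕ) {p : ℝ}
    (hp : 0 ≤ p) :
    |μ.real (X ∩ B) - μ.real B * p| ≤
      ∑ m ∈ range C, |μ.real (X ∩ (B ∩ {ω | η ω = m})) - μ.real (B ∩ {ω | η ω = m}) * p|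
        + μ.real (X ∩ (B ∩ {ω | C ≤ η ω})) + μ.real (B ∩ {ω | C ≤ η ω}) * p := by
  have hXB := measureReal_eq_sum_fiber_inter_add (μ := μ) hη (X ∩ B) C
  have hB := measureReal_eq_sum_fiber_inter_add (μ := μ) hη B C
  simp only [Set.inter_comm _ (X ∩ B), Set.inter_assoc, Set.inter_comm {ω | _ ≤ η ω} B,
    Set.inter_comm {ω | η ω = _} B] at hXB hB
  rw [hXB, hB]
  set r := μ.real (X ∩ (B ∩ {ω | C ≤ η ω}))
  set e := μ.real (B ∩ {ω | C ≤ η ω})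
  have hr : 0 ≤ r := measureReal_nonneg
  have he : 0 ≤ e := measureReal_nonneg
  calc _ = |∑ m ∈ range C, (μ.real (X ∩ (B ∩ {ω | η ω = m})) - μ.real (B ∩ {ω | η ω = m}) * p)
          + (r - e * p)| := by
        rw [sum_sub_distrib, ← sum_mul]; ring_nf
    _ ≤ ∑ m ∈ range C, |μ.real (X ∩ (B ∩ {ω | η ω = m})) - μ.real (B ∩ {ω | η ω = m}) * p|
          + (r + e * p) :=
      (abs_add_le _ _).trans (add_le_add (abs_sum_le_sum_abs _ _)
        (abs_le.2 ⟨by nlinarith, by nlinarith⟩))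
    _ = _ := by ring

theorem measureReal_inter_inter_eq_mul_div {X B F : Set Ω}
    (hcond : μ (B ∩ F) ≠ 0 →
      μ.real (X ∩ (B ∩ F)) / μ.real (B ∩ F) = μ.real (X ∩ F) / μ.real F) :
    μ.real (X ∩ (B ∩ F)) = μ.real (B ∩ F) * (μ.real (X ∩ F) / μ.real F) := by
  by_cases h0 : μ (B ∩ F) = 0
  · simp [measureReal_def, h0, measure_mono_null Set.inter_subset_right h0]
  · rw [← hcond h0, mul_div_cancel₀ _ ((measureReal_eq_zero_iff).not.2 h0)]

theorem tsum_abs_measureReal_inter_inter_sub_le {B F : Set Ω} {δ : ℝ}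
    (hcond : ∀ n, μ (B ∩ F) ≠ 0 →
      μ.real ({ω | N ω = n} ∩ (B ∩ F)) / μ.real (B ∩ F) =
        μ.real ({ω | N ω = n} ∩ F) / μ.real F)
    (hclose : ∑' n, |μ.real ({ω | N ω = n} ∩ F) / μ.real F - μ.real {ω | N ω = n}| ≤ δ) :
    ∑' n, |μ.real ({ω | N ω = n} ∩ (B ∩ F)) - μ.real (B ∩ F) * μ.real {ω | N ω = n}|
      ≤ μ.real (B ∩ F) * δ := by
  simp only [measureReal_inter_inter_eq_mul_div (hcond _), ← mul_sub, abs_mul,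
    abs_of_nonneg measureReal_nonneg, tsum_mul_left]
  exact mul_le_mul_of_nonneg_left hclose measureReal_nonneg

theorem summable_abs_measureReal_fiber_inter_sub_mul (hN : Measurable N) (Y : Set Ω) (c : ℝ) :
    Summable fun n => |μ.real ({ω | N ω = n} ∩ Y) - c * μ.real {ω | N ω = n}| := by
  have hp := hasSum_measureReal_fiber_inter (μ := μ) hN Set.univ
  simp only [Set.inter_univ] at hp
  exact ((hasSum_measureReal_fiber_inter hN Y).summable.sub (hp.summable.mul_left c)).abs

end ConditionalLaw

theorem tsum_abs_measureReal_fiber_inter_sub_le {Ω : Type*} [MeasurableSpace Ω] {μ : Measure Ω}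
    [IsProbabilityMeasure μ] {N η : Ω → ℕ} (hN : Measurable N) (hη : Measurable η) (B : Set Ω)
    (C : ℕ) :
    ∑' n, |μ.real ({ω | N ω = n} ∩ B) - μ.real B * μ.real {ω | N ω = n}| ≤
      ∑ m ∈ range C, ∑' n, |μ.real ({ω | N ω = n} ∩ (B ∩ {ω | η ω = m}))
          - μ.real (B ∩ {ω | η ω = m}) * μ.real {ω | N ω = n}|
        + 2 * μ.real (B ∩ {ω | C ≤ η ω}) := by
  set E := B ∩ {ω | C ≤ η ω}
  have hp := hasSum_measureReal_fiber_inter (μ := μ) hN Set.univ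
  simp only [Set.inter_univ, probReal_univ] at hp
  have hbound := ((hasSum_sum (s := range C) fun m _ =>
      (summable_abs_measureReal_fiber_inter_sub_mul (μ := μ) hN (B ∩ {ω | η ω = m})
        (μ.real (B ∩ {ω | η ω = m}))).hasSum).add
    (hasSum_measureReal_fiber_inter (μ := μ) hN E)).add (hp.mul_left (μ.real E))
  refine (hasSum_le (fun n => ?_) (summable_abs_measureReal_fiber_inter_sub_mul hN B _).hasSum
    hbound).trans_eq (by ring)
  exact abs_measureReal_inter_sub_mul_le hη _ B C measureReal_nonneg

theorem stmt5_general {Ω : Type*} [MeasurableSpace Ω] (P : Measure Ω) [IsProbabilityMeasure P]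
    (N η : Ω → ℕ) (hNm : Measurable N) (hηm : Measurable η)
    (B : Set Ω)
    (ε : ℝ) (C : ℕ)
    (hC : (P {ω | C ≤ η ω}).toReal < ε * (P B).toReal / 4)
    (h1 : ∀ m < C, ∑' n : ℕ,
        |(P ({ω | N ω = n} ∩ {ω | η ω = m})).toReal / (P {ω | η ω = m}).toReal
          - (P {ω | N ω = n}).toReal| < ε / (4 * C))
    (h2 : ∀ n m : ℕ, P (B ∩ {ω | η ω = m}) ≠ 0 →
      (P ({ω | N ω = n} ∩ (B ∩ {ω | η ω = m}))).toReal / (P (B ∩ {ω | η ω = m})).toReal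
        = (P ({ω | N ω = n} ∩ {ω | η ω = m})).toReal / (P {ω | η ω = m}).toReal) :
    ∑' n : ℕ, |(P ({ω | N ω = n} ∩ B)).toReal / (P B).toReal - (P {ω | N ω = n}).toReal|
      ≤ 3 * ε / 4 := by
  simp only [← measureReal_def] at hC h1 h2 ⊢
  have hεPB : 0 < ε * P.real B := by linarith [measureReal_nonneg (μ := P) (s := {ω | C ≤ η ω})]
  have hε : 0 < ε := pos_of_mul_pos_left hεPB measureReal_nonneg
  have hPB : 0 < P.real B := pos_of_mul_pos_right hεPB hε.le
  have hδ : ε / (4 * C) ≤ ε / 4 := by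
    rcases C.eq_zero_or_pos with rfl | hC0
    · simp only [CharP.cast_eq_zero, mul_zero, div_zero]; positivity
    · gcongr; norm_cast; omega
  have hhead : ∑ m ∈ range C, P.real (B ∩ {ω | η ω = m}) ≤ P.real B := by
    have := measureReal_eq_sum_fiber_inter_add (μ := P) hηm B C
    simp only [Set.inter_comm _ B] at this
    linarith [measureReal_nonneg (μ := P) (s := B ∩ {ω | C ≤ η ω})]
  have hfibers : ∑ m ∈ range C, ∑' n, |P.real ({ω | N ω = n} ∩ (B ∩ {ω | η ω = m}))
      - P.real (B ∩ {ω | η ω = m}) * P.real {ω | N ω = n}| ≤ P.real B * (ε / 4) :=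
    calc _ ≤ ∑ m ∈ range C, P.real (B ∩ {ω | η ω = m}) * (ε / (4 * C)) :=
          sum_le_sum fun m hm =>
            tsum_abs_measureReal_inter_inter_sub_le (h2 · m) (h1 m (mem_range.1 hm)).le
      _ ≤ P.real B * (ε / 4) := by
          rw [← sum_mul]; exact mul_le_mul hhead hδ (by positivity) hPB.le
  have htail : P.real (B ∩ {ω | C ≤ η ω}) ≤ P.real {ω | C ≤ η ω} :=
    measureReal_mono Set.inter_subset_right
  have hnormalize : ∀ n, |P.real ({ω | N ω = n} ∩ B) / P.real B - P.real {ω | N ω = n}| =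
      |P.real ({ω | N ω = n} ∩ B) - P.real B * P.real {ω | N ω = n}| / P.real B := fun n => by
    rw [div_sub' hPB.ne', abs_div, abs_of_pos hPB, mul_comm]
  rw [tsum_congr hnormalize, tsum_div_const, div_le_iff₀ hPB]
  linarith [tsum_abs_measureReal_fiber_inter_sub_le (μ := P) hNm hηm B C]

/-- The key total variation estimate: if `N` is conditionally independent of `B` given `η`,
the conditional law of `N` given `{η = m}` is close to its unconditional law for `m < C`,
and the tails `{η ≥ C}`, `{N ≥ D}` are small, then the total variation distance between the
conditional law of `N` given `B` and its unconditional law is at most `3ε/4`. -/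
theorem stmt5 {Ω : Type*} [MeasurableSpace Ω] (P : Measure Ω) [IsProbabilityMeasure P]
    (N η : Ω → ℕ) (hNm : Measurable N) (hηm : Measurable η)
    (B : Set Ω) (hBm : MeasurableSet B) (hB : P B ≠ 0)
    (ε : ℝ) (hε : 0 < ε) (C D : ℕ)
    (hD : (P {ω | D ≤ N ω}).toReal < ε * (P B).toReal / 4)
    (hC : (P {ω | C ≤ η ω}).toReal < ε * (P B).toReal / 4)
    (h1 : ∀ m < C, ∑' n : ℕ,
        |(P ({ω | N ω = n} ∩ {ω | η ω = m})).toReal / (P {ω | η ω = m}).toReal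
          - (P {ω | N ω = n}).toReal| < ε / (4 * C))
    (h2 : ∀ n m : ℕ, P (B ∩ {ω | η ω = m}) ≠ 0 →
      (P ({ω | N ω = n} ∩ (B ∩ {ω | η ω = m}))).toReal / (P (B ∩ {ω | η ω = m})).toReal
        = (P ({ω | N ω = n} ∩ {ω | η ω = m})).toReal / (P {ω | η ω = m}).toReal) :
    ∑' n : ℕ, |(P ({ω | N ω = n} ∩ B)).toReal / (P B).toReal - (P {ω | N ω = n}).toReal|
      ≤ 3 * ε / 4 :=
  stmt5_general P N η hNm hηm B ε C hC h1 h2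
end

section
/- Let x, y, z, v be four distinct points in ℤ^d and suppose P_a[H_b < ∞] ≤ c·⟨ab⟩^{-(d-2)} for simple random walk, where ⟨ab⟩ = 1+|a−b|₁. If a random walk path started at x hits all of y, z, v, then summing over orderings gives P_x[H_y<∞, H_z<∞, H_v<∞] ≤ c'·⟨{x,y,z,v}⟩^{-(d-2)}, where ⟨{x,y,z,v}⟩ is the minimal spanning tree product. -/
/-!
On the event that `y`, `z`, `v` are all hit, their hitting times are pairwise distinct, so the
event is covered by the six events "`a` is hit before `b`, which is hit before `e`", `(a, b, e)`
running over the orderings of `(y, z, v)`. By the strong Markov bound and the two-point bound, each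
of them has probability at most `c³ (⟨xa⟩⟨ab⟩⟨be⟩)^{-(d-2)}`, and as the path `x – a – b – e` is a
spanning tree of `{x, y, z, v}` this is at most `c³ ⟨{x, y, z, v}⟩^{-(d-2)}`; so `c' = 6 c³` works.
-/

open MeasureTheory

/-- `pgauge x y = 1 + |x - y|₁` for `x, y ∈ ℤ^d`. -/
noncomputable def pgauge {d : ℕ} (x y : Fin d → ℤ) : ℝ := 1 + ∑ i, |(x i : ℝ) - (y i : ℝ)|

/-- The weight `⟨a b⟩` of an (unordered) edge of a graph on a finite set of points of `ℤ^d`. -/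
noncomputable def edgeWeight {d : ℕ} {W : Finset (Fin d → ℤ)} (e : Sym2 W) : ℝ :=
  Sym2.lift (⟨fun a b => pgauge (a : Fin d → ℤ) (b : Fin d → ℤ), fun a b => by
    simp only [pgauge, abs_sub_comm]⟩ :
      { f : W → W → ℝ // ∀ a b, f a b = f b a }) e

/-- `⟨W⟩`: the minimum over spanning trees `τ` on the finite vertex set `W ⊂ ℤ^d` of the
product `∏_{{a,b} ∈ τ} (1 + |a-b|₁)`. -/
noncomputable def treeWeight {d : ℕ} (W : Finset (Fin d → ℤ)) : ℝ :=
  sInf {p : ℝ | ∃ G : SimpleGraph W, G.IsTree ∧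
    p = ∏ e ∈ (Set.toFinite G.edgeSet).toFinset, edgeWeight e}

/-- A random relation `R` on `ℤ^d` has stochastic dimension `d - α` if there is `c > 0` with
`c P[xRy] ≥ ⟨xy⟩^{-α}` and `P[xRy, zRv] ≤ c ⟨xy⟩^{-α} ⟨zv⟩^{-α} + c ⟨xyzv⟩^{-α}`. -/
def HasStochDim {d : ℕ} {Ω : Type*} [MeasurableSpace Ω] (P : Measure Ω)
    (R : Ω → Set ((Fin d → ℤ) × (Fin d → ℤ))) (α : ℝ) : Prop :=
  ∃ c : ℝ, 0 < c ∧
    (∀ x y : Fin d → ℤ, pgauge x y ^ (-α) ≤ c * (P {ω | (x, y) ∈ R ω}).toReal) ∧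
    (∀ x y z v : Fin d → ℤ,
      (P {ω | (x, y) ∈ R ω ∧ (z, v) ∈ R ω}).toReal ≤
        c * (pgauge x y ^ (-α)) * (pgauge z v ^ (-α)) + c * treeWeight {x, y, z, v} ^ (-α))

/-- The hitting time `H_y = inf {n ≥ 1 : γ n = y}` of `y` by the path `γ` (with value `⊤` if
`y` is never hit). -/
noncomputable def hitTime {d : ℕ} (y : Fin d → ℤ) (γ : ℕ → (Fin d → ℤ)) : ℕ∞ :=
  ⨅ (n : ℕ) (_ : 1 ≤ n ∧ γ n = y), (n : ℕ∞)

section treeWeight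

variable {d : ℕ}

theorem one_le_pgauge (x y : Fin d → ℤ) : 1 ≤ pgauge x y :=
  le_add_of_nonneg_right (Finset.sum_nonneg fun _ _ => abs_nonneg _)

theorem one_le_edgeWeight {W : Finset (Fin d → ℤ)} (e : Sym2 W) : 1 ≤ edgeWeight e := by
  induction e using Sym2.ind with
  | _ a b => exact one_le_pgauge a.1 b.1

theorem one_le_prod_edgeWeight {W : Finset (Fin d → ℤ)} (s : Finset (Sym2 W)) :
    1 ≤ ∏ e ∈ s, edgeWeight e :=
  Finset.one_le_prod fun e _ => one_le_edgeWeight e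

theorem treeWeight_le_of_isTree {W : Finset (Fin d → ℤ)} {G : SimpleGraph W} (hG : G.IsTree) :
    treeWeight W ≤ ∏ e ∈ (Set.toFinite G.edgeSet).toFinset, edgeWeight e :=
  csInf_le ⟨1, by rintro _ ⟨H, -, rfl⟩; exact one_le_prod_edgeWeight _⟩ ⟨G, hG, rfl⟩

theorem one_le_treeWeight {W : Finset (Fin d → ℤ)} (hW : W.Nonempty) : 1 ≤ treeWeight W := by
  have : Nonempty W := hW.to_subtype
  obtain ⟨T, -, hT⟩ := (SimpleGraph.connected_top (V := W)).exists_isTree_le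
  exact le_csInf ⟨_, T, hT, rfl⟩ (by rintro _ ⟨H, -, rfl⟩; exact one_le_prod_edgeWeight _)

end treeWeight

namespace SimpleGraph

theorem edgeSet_fromEdgeSet_path {V : Type*} {a b c e : V} (hab : a ≠ b) (hbc : b ≠ c)
    (hce : c ≠ e) :
    (fromEdgeSet {s(a, b), s(b, c), s(c, e)}).edgeSet = {s(a, b), s(b, c), s(c, e)} := by
  simp [edgeSet_fromEdgeSet, hab, hbc, hce]

theorem isTree_fromEdgeSet_path {V : Type*} {a b c e : V} (hab : a ≠ b) (hac : a ≠ c)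
    (hae : a ≠ e) (hbc : b ≠ c) (hbe : b ≠ e) (hce : c ≠ e)
    (huniv : (Set.univ : Set V) = {a, b, c, e}) :
    (fromEdgeSet {s(a, b), s(b, c), s(c, e)}).IsTree := by
  set G := fromEdgeSet {s(a, b), s(b, c), s(c, e)}
  have hreach : ∀ w, G.Reachable a w := by
    have h₁ : G.Adj a b := by simp [G, hab]
    have h₂ : G.Adj b c := by simp [G, hbc]
    have h₃ : G.Adj c e := by simp [G, hce]
    intro w
    have hw : w ∈ ({a, b, c, e} : Set V) := huniv ▸ Set.mem_univ w
    rcases hw with rfl | rfl | rfl | rfl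
    exacts [.rfl, h₁.reachable, h₁.reachable.trans h₂.reachable,
      h₁.reachable.trans (h₂.reachable.trans h₃.reachable)]
  have : Nonempty V := ⟨a⟩
  have : Finite V := Set.finite_univ_iff.mp (huniv ▸ Set.toFinite _)
  rw [isTree_iff_connected_and_card]
  refine ⟨⟨fun u w => (hreach u).symm.trans (hreach w)⟩, ?_⟩
  rw [← Set.ncard_univ V, huniv, Nat.card_coe_set_eq, edgeSet_fromEdgeSet_path hab hbc hce]
  simp [Set.ncard_insert_of_notMem, hab, hac, hae, hbc, hbe, hce]

end SimpleGraph

theorem treeWeight_le_path {d : ℕ} {a b c e : Fin d → ℤ} (hab : a ≠ b) (hac : a ≠ c)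
    (hae : a ≠ e) (hbc : b ≠ c) (hbe : b ≠ e) (hce : c ≠ e) :
    treeWeight {a, b, c, e} ≤ pgauge a b * pgauge b c * pgauge c e := by
  set W : Finset (Fin d → ℤ) := {a, b, c, e}
  let a' : W := ⟨a, by simp [W]⟩
  let b' : W := ⟨b, by simp [W]⟩
  let c' : W := ⟨c, by simp [W]⟩
  let e' : W := ⟨e, by simp [W]⟩
  have hab' : a' ≠ b' := ne_of_apply_ne Subtype.val hab
  have hac' : a' ≠ c' := ne_of_apply_ne Subtype.val hac
  have hae' : a' ≠ e' := ne_of_apply_ne Subtype.val hae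
  have hbc' : b' ≠ c' := ne_of_apply_ne Subtype.val hbc
  have hbe' : b' ≠ e' := ne_of_apply_ne Subtype.val hbe
  have hce' : c' ≠ e' := ne_of_apply_ne Subtype.val hce
  have huniv : (Set.univ : Set W) = {a', b', c', e'} := by
    ext ⟨w, hw⟩
    simpa [W, a', b', c', e'] using hw
  have hT := SimpleGraph.isTree_fromEdgeSet_path hab' hac' hae' hbc' hbe' hce' huniv
  have hE : (Set.toFinite (SimpleGraph.fromEdgeSet {s(a', b'), s(b', c'), s(c', e')}).edgeSet
      ).toFinset = {s(a', b'), s(b', c'), s(c', e')} := by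
    ext
    rw [Set.Finite.mem_toFinset, SimpleGraph.edgeSet_fromEdgeSet_path hab' hbc' hce']
    simp
  refine (treeWeight_le_of_isTree hT).trans_eq ?_
  rw [hE, Finset.prod_insert (by simp [hab', hac', hbc']),
    Finset.prod_insert (by simp [hbc', hce', hbe']), Finset.prod_singleton, mul_assoc]
  rfl

theorem finset_three_comp_perm {α : Type*} [DecidableEq α] (p : Fin 3 → α)
    (σ : Equiv.Perm (Fin 3)) : ({p (σ 0), p (σ 1), p (σ 2)} : Finset α) = {p 0, p 1, p 2} := by
  have h : ∀ q : Fin 3 → α, ({q 0, q 1, q 2} : Finset α) = Finset.univ.image q := fun q => by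
    ext
    simp [Fin.exists_fin_succ, eq_comm]
  rw [h p, ← Finset.image_univ_equiv σ, Finset.image_image]
  exact h (p ∘ σ)

section hitTime

variable {d : ℕ} {γ : ℕ → Fin d → ℤ}

theorem exists_hitTime_eq {y : Fin d → ℤ} (h : hitTime y γ < ⊤) :
    ∃ n : ℕ, γ n = y ∧ hitTime y γ = n := by
  rw [hitTime, iInf_subtype'] at h ⊢
  have : Nonempty {n // 1 ≤ n ∧ γ n = y} := ENat.iInf_natCast_lt_top.mp h
  obtain ⟨i, hi⟩ := ENat.exists_eq_iInf fun i : {n // 1 ≤ n ∧ γ n = y} => (i.1 : ℕ∞)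
  exact ⟨i, i.2.2, hi.symm⟩

theorem hitTime_ne_of_lt_top {y z : Fin d → ℤ} (hyz : y ≠ z) (hy : hitTime y γ < ⊤) :
    hitTime y γ ≠ hitTime z γ := by
  intro h
  obtain ⟨n, hny, hn⟩ := exists_hitTime_eq hy
  obtain ⟨m, hmz, hm⟩ := exists_hitTime_eq (h ▸ hy)
  rw [hn, hm, Nat.cast_inj] at h
  exact hyz (hny.symm.trans (h ▸ hmz))

theorem exists_perm_strictMono_hitTime {n : ℕ} {p : Fin n → Fin d → ℤ} (hp : p.Injective)
    (h : ∀ i, hitTime (p i) γ < ⊤) :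
    ∃ σ : Equiv.Perm (Fin n), StrictMono fun i => hitTime (p (σ i)) γ := by
  have hinj : Function.Injective fun i => hitTime (p i) γ := fun i j hij =>
    hp (not_imp_comm.mp (hitTime_ne_of_lt_top · (h i)) (not_not.mpr hij))
  exact ⟨Tuple.sort _, (Tuple.monotone_sort _).strictMono_of_injective
    (hinj.comp (Tuple.sort _).injective)⟩

def orderedHits (a b e : Fin d → ℤ) : Set (ℕ → Fin d → ℤ) :=
  {γ | hitTime a γ < hitTime b γ ∧ hitTime b γ < hitTime e γ ∧ hitTime e γ < ⊤}

theorem setOf_hitTime_lt_top_subset_iUnion_orderedHits {p : Fin 3 → Fin d → ℤ}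
    (hp : p.Injective) :
    {γ | ∀ i, hitTime (p i) γ < ⊤} ⊆
      ⋃ σ : Equiv.Perm (Fin 3), orderedHits (p (σ 0)) (p (σ 1)) (p (σ 2)) := by
  intro γ h
  obtain ⟨σ, hσ⟩ := exists_perm_strictMono_hitTime hp h
  exact Set.mem_iUnion.mpr ⟨σ, hσ (by decide), hσ (by decide), h _⟩

end hitTime

theorem measureReal_orderedHits_le {d : ℕ} {P : (Fin d → ℤ) → Measure (ℕ → Fin d → ℤ)}
    {c α : ℝ} (hc : 0 ≤ c) (hα : 0 ≤ α)
    (hHit : ∀ a b : Fin d → ℤ, a ≠ b →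
      ((P a) {γ | hitTime b γ < ⊤}).toReal ≤ c * pgauge a b ^ (-α))
    (hMarkov : ∀ x a b e : Fin d → ℤ, ((P x) (orderedHits a b e)).toReal
        ≤ ((P x) {γ | hitTime a γ < ⊤}).toReal * ((P a) {γ | hitTime b γ < ⊤}).toReal *
            ((P b) {γ | hitTime e γ < ⊤}).toReal)
    {x a b e : Fin d → ℤ} (hxa : x ≠ a) (hxb : x ≠ b) (hxe : x ≠ e) (hab : a ≠ b) (hae : a ≠ e)
    (hbe : b ≠ e) :
    (P x).real (orderedHits a b e) ≤ c ^ 3 * treeWeight {x, a, b, e} ^ (-α) := by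
  have hpos : ∀ u w : Fin d → ℤ, 0 < pgauge u w := fun u w => one_pos.trans_le (one_le_pgauge u w)
  have hbound : ∀ u w : Fin d → ℤ, 0 ≤ c * pgauge u w ^ (-α) := fun u w =>
    mul_nonneg hc (Real.rpow_nonneg (hpos u w).le _)
  calc (P x).real (orderedHits a b e)
      ≤ (c * pgauge x a ^ (-α)) * (c * pgauge a b ^ (-α)) * (c * pgauge b e ^ (-α)) :=
        (hMarkov x a b e).trans <| mul_le_mul
          (mul_le_mul (hHit x a hxa) (hHit a b hab) ENNReal.toReal_nonneg (hbound x a))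
          (hHit b e hbe) ENNReal.toReal_nonneg (mul_nonneg (hbound x a) (hbound a b))
    _ = c ^ 3 * (pgauge x a * pgauge a b * pgauge b e) ^ (-α) := by
        rw [Real.mul_rpow (mul_pos (hpos x a) (hpos a b)).le (hpos b e).le,
          Real.mul_rpow (hpos x a).le (hpos a b).le]
        ring
    _ ≤ c ^ 3 * treeWeight {x, a, b, e} ^ (-α) := by
        gcongr c ^ 3 * ?_
        exact Real.rpow_le_rpow_of_nonpos
          (one_pos.trans_le (one_le_treeWeight (Finset.insert_nonempty _ _)))
          (treeWeight_le_path hxa hxb hxe hab hae hbe) (neg_nonpos.mpr hα)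

theorem measureReal_hitTime_lt_top_three_le {d : ℕ}
    {P : (Fin d → ℤ) → Measure (ℕ → Fin d → ℤ)} {c α : ℝ} (hc : 0 ≤ c) (hα : 0 ≤ α)
    (hHit : ∀ a b : Fin d → ℤ, a ≠ b →
      ((P a) {γ | hitTime b γ < ⊤}).toReal ≤ c * pgauge a b ^ (-α))
    (hMarkov : ∀ x a b e : Fin d → ℤ, ((P x) (orderedHits a b e)).toReal
        ≤ ((P x) {γ | hitTime a γ < ⊤}).toReal * ((P a) {γ | hitTime b γ < ⊤}).toReal *
            ((P b) {γ | hitTime e γ < ⊤}).toReal)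
    {x y z v : Fin d → ℤ} [IsFiniteMeasure (P x)] (hxy : x ≠ y) (hxz : x ≠ z) (hxv : x ≠ v)
    (hyz : y ≠ z) (hyv : y ≠ v) (hzv : z ≠ v) :
    (P x).real {γ | hitTime y γ < ⊤ ∧ hitTime z γ < ⊤ ∧ hitTime v γ < ⊤}
      ≤ 6 * c ^ 3 * treeWeight {x, y, z, v} ^ (-α) := by
  set p : Fin 3 → Fin d → ℤ := ![y, z, v]
  have hp : p.Injective := by
    intro i j h
    fin_cases i <;> fin_cases j <;> simp_all [p]
  have hx : ∀ i, x ≠ p i := by simp [Fin.forall_fin_succ, p, hxy, hxz, hxv]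
  have hS : {γ | hitTime y γ < ⊤ ∧ hitTime z γ < ⊤ ∧ hitTime v γ < ⊤} =
      {γ | ∀ i, hitTime (p i) γ < ⊤} := by
    ext
    simp [Fin.forall_fin_succ, p]
  calc (P x).real {γ | hitTime y γ < ⊤ ∧ hitTime z γ < ⊤ ∧ hitTime v γ < ⊤}
      ≤ ∑ σ : Equiv.Perm (Fin 3), (P x).real (orderedHits (p (σ 0)) (p (σ 1)) (p (σ 2))) :=
        hS ▸ (measureReal_mono (setOf_hitTime_lt_top_subset_iUnion_orderedHits hp)).trans
          (measureReal_iUnion_fintype_le _)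
    _ ≤ ∑ _σ : Equiv.Perm (Fin 3), c ^ 3 * treeWeight {x, p 0, p 1, p 2} ^ (-α) := by
        gcongr with σ
        have hpσ := hp.comp σ.injective
        rw [← finset_three_comp_perm p σ]
        exact measureReal_orderedHits_le hc hα hHit hMarkov (hx _) (hx _) (hx _)
          (hpσ.ne (by decide)) (hpσ.ne (by decide)) (hpσ.ne (by decide))
    _ = 6 * c ^ 3 * treeWeight {x, y, z, v} ^ (-α) := by
        simp only [Finset.sum_const, Finset.card_univ, Fintype.card_perm, Fintype.card_fin,
          nsmul_eq_mul, p, Matrix.cons_val_zero, Matrix.cons_val_one, Matrix.cons_val]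
        ring

/-- If the laws `P x` of simple random walk satisfy `P_a[H_b < ∞] ≤ c ⟨a,b⟩^{-(d-2)}` (together
with the strong Markov chain inequality), then summing over the orderings in which `y, z, v` are
hit gives `P_x[H_y < ∞, H_z < ∞, H_v < ∞] ≤ c' ⟨{x,y,z,v}⟩^{-(d-2)}`, where `⟨{x,y,z,v}⟩` is the
minimal spanning-tree product. -/
theorem stmt17 {d : ℕ} (hd : 3 ≤ d)
    (P : (Fin d → ℤ) → Measure (ℕ → Fin d → ℤ))
    (hP : ∀ x, IsProbabilityMeasure (P x))
    (c : ℝ) (hc : 0 < c)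
    (hHit : ∀ a b : Fin d → ℤ, a ≠ b →
      ((P a) {γ | hitTime b γ < ⊤}).toReal ≤ c * pgauge a b ^ (-(d - 2 : ℝ)))
    (hMarkov : ∀ x a b e : Fin d → ℤ,
      ((P x) {γ | hitTime a γ < hitTime b γ ∧ hitTime b γ < hitTime e γ ∧
          hitTime e γ < ⊤}).toReal
        ≤ ((P x) {γ | hitTime a γ < ⊤}).toReal * ((P a) {γ | hitTime b γ < ⊤}).toReal *
            ((P b) {γ | hitTime e γ < ⊤}).toReal) :
    ∃ c' : ℝ, 0 < c' ∧ ∀ x y z v : Fin d → ℤ,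
      x ≠ y → x ≠ z → x ≠ v → y ≠ z → y ≠ v → z ≠ v →
      ((P x) {γ | hitTime y γ < ⊤ ∧ hitTime z γ < ⊤ ∧ hitTime v γ < ⊤}).toReal
        ≤ c' * treeWeight ({x, y, z, v} : Finset (Fin d → ℤ)) ^ (-(d - 2 : ℝ)) := by
  refine ⟨6 * c ^ 3, by positivity, fun x y z v hxy hxz hxv hyz hyv hzv => ?_⟩
  have hα : 0 ≤ (d - 2 : ℝ) := by
    have : (3 : ℝ) ≤ d := by exact_mod_cast hd
    linarith
  have := hP x
  exact measureReal_hitTime_lt_top_three_le hc.le hα hHit hMarkov hxy hxz hxv hyz hyv hzv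
end
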